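/- arXiv:1504.02937 — 2 statements merged into one kernel-verified Lean document; each statement's English description precedes it below -/
import Mathlib

section
/- Let a and b be points carrying a fixed family P(a,b) of finite sequences (paths), and suppose the following 'slim triangle' property holds abstractly in a metric space X: for every three points x₀, x₁, x₂ of X and every point c on a path in P(x₀, x₂), there is a point c* on a path in P(x₀, x₁) ∪ P(x₁, x₂) with d(c, c*) ≤ 1. Then for every sequence x₀, x₁, …, x_m of points of X with m ≤ 2^k (k ≥ 1), every point c on a path in P(x₀, x_m) satisfies: there exist an index 0 ≤ i < m and a point c* on a path in P(x_i, x_{i+1}) such that d(c, c*) ≤ k. Assume also that for m ≤ 2 the conclusion holds with bound 1 (i.e., the base case: for m = 0 or 1 any point of a path in P(x₀, x_m) is within distance 1 of some point of a path between consecutive terms). -/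
/-!
Split `x 0, …, x m` at `j = m / 2`. A point of a path from `x 0` to `x m` is within `1` of a
point on a path from `x 0` to `x j` or from `x j` to `x m` (slim triangles), and both halves have
at most `2 ^ (k - 1)` steps, so induction on `k` costs one unit of distance per halving.
-/

namespace DyadicSubdivision

variable {X : Type*} [PseudoMetricSpace X] (P : X → X → Set (Set X))

def OnPath (a b c : X) : Prop := ∃ p ∈ P a b, c ∈ p

def IsNearChain (x : ℕ → X) (m : ℕ) (r : ℝ) (c : X) : Prop :=
  ∃ i < m, ∃ c' : X, OnPath P (x i) (x (i + 1)) c' ∧ dist c c' ≤ r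

def SlimTriangles : Prop :=
  ∀ x₀ x₁ x₂ c : X, OnPath P x₀ x₂ c →
    ∃ c' : X, (OnPath P x₀ x₁ c' ∨ OnPath P x₁ x₂ c') ∧ dist c c' ≤ 1

variable {P}

theorem IsNearChain.mono_length {x : ℕ → X} {m n : ℕ} {r : ℝ} {c : X}
    (h : IsNearChain P x m r c) (hmn : m ≤ n) : IsNearChain P x n r c := by
  obtain ⟨i, hi, c', hc', hd⟩ := h
  exact ⟨i, hi.trans_le hmn, c', hc', hd⟩

theorem IsNearChain.of_shift {x : ℕ → X} {j l : ℕ} {r : ℝ} {c : X}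
    (h : IsNearChain P (fun n ↦ x (j + n)) l r c) : IsNearChain P x (j + l) r c := by
  obtain ⟨i, hi, c', hc', hd⟩ := h
  exact ⟨j + i, by omega, c', hc', hd⟩

theorem IsNearChain.of_dist_le_one {x : ℕ → X} {m : ℕ} {r : ℝ} {c c' : X}
    (h : IsNearChain P x m r c') (hcc' : dist c c' ≤ 1) : IsNearChain P x m (r + 1) c := by
  obtain ⟨i, hi, c'', hc'', hd⟩ := h
  refine ⟨i, hi, c'', hc'', ?_⟩
  linarith [dist_triangle c c' c'']

theorem isNearChain_add (hslim : SlimTriangles P) {N : ℕ} {r : ℝ}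
    (ih : ∀ (y : ℕ → X) (n : ℕ), n ≤ N → ∀ c, OnPath P (y 0) (y n) c → IsNearChain P y n r c)
    {x : ℕ → X} {j l : ℕ} (hj : j ≤ N) (hl : l ≤ N) {c : X}
    (hc : OnPath P (x 0) (x (j + l)) c) : IsNearChain P x (j + l) (r + 1) c := by
  obtain ⟨c', hc' | hc', hcc'⟩ := hslim (x 0) (x j) (x (j + l)) c hc
  · exact ((ih x j hj c' hc').mono_length (Nat.le_add_right j l)).of_dist_le_one hcc'
  · exact (ih (fun n ↦ x (j + n)) l hl c' hc').of_shift.of_dist_le_one hcc'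

theorem isNearChain_of_le_two_pow (hslim : SlimTriangles P)
    (hbase : ∀ (x : ℕ → X) (m : ℕ), m ≤ 2 → ∀ c, OnPath P (x 0) (x m) c → IsNearChain P x m 1 c)
    {k : ℕ} (hk : 1 ≤ k) (x : ℕ → X) {m : ℕ} (hm : m ≤ 2 ^ k) {c : X}
    (hc : OnPath P (x 0) (x m) c) : IsNearChain P x m k c := by
  induction k, hk using Nat.le_induction generalizing x m c with
  | base => exact_mod_cast hbase x m (by simpa using hm) c hc
  | succ k _ ih =>
    rw [pow_succ] at hm
    obtain ⟨j, l, rfl, hj, hl⟩ : ∃ j l, m = j + l ∧ j ≤ 2 ^ k ∧ l ≤ 2 ^ k :=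
      ⟨m / 2, m - m / 2, by omega, by omega, by omega⟩
    push_cast
    exact isNearChain_add hslim (fun y n hn c hc ↦ ih y hn hc) hj hl hc

end DyadicSubdivision

open DyadicSubdivision in
/-- Dyadic subdivision lemma: if the family of paths `P` forms 1-slim triangles
and the base case (sequences of length ≤ 2) holds with bound 1, then for any
sequence `x 0, …, x m` with `m ≤ 2 ^ k`, any point `c` on a path in
`P (x 0) (x m)` is within distance `k` of a point on a path between
consecutive terms. -/
theorem stmt_3 {X : Type*} [MetricSpace X] (P : X → X → Set (Set X))
    (hslim : ∀ x₀ x₁ x₂ : X, ∀ c : X, (∃ p ∈ P x₀ x₂, c ∈ p) →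
      ∃ c' : X, ((∃ p ∈ P x₀ x₁, c' ∈ p) ∨ (∃ p ∈ P x₁ x₂, c' ∈ p)) ∧ dist c c' ≤ 1)
    (hbase : ∀ (x : ℕ → X) (m : ℕ), m ≤ 2 → ∀ c : X, (∃ p ∈ P (x 0) (x m), c ∈ p) →
      ∃ i < m, ∃ c' : X, (∃ p ∈ P (x i) (x (i + 1)), c' ∈ p) ∧ dist c c' ≤ 1) :
    ∀ (k : ℕ), 1 ≤ k → ∀ (x : ℕ → X) (m : ℕ), m ≤ 2 ^ k →
      ∀ c : X, (∃ p ∈ P (x 0) (x m), c ∈ p) →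
        ∃ i < m, ∃ c' : X, (∃ p ∈ P (x i) (x (i + 1)), c' ∈ p) ∧ dist c c' ≤ (k : ℝ) :=
  fun _ hk x _ hm _ hc ↦ isNearChain_of_le_two_pow hslim hbase hk x hm hc
end

section
/- Let G be a connected graph with graph metric d. Suppose that for every triple of vertices a, b, d there exist points c¹, c², c³ (one associated to each pair) such that d(cⁱ, cʲ) ≤ 1 for i ≠ j, and such that each cⁱ is within distance 6 of every geodesic joining the corresponding pair of vertices. Then every geodesic triangle in G has a 7-center, i.e., G is 7-hyperbolic. -/
namespace SimpleGraph

variable {V : Type*} {G : SimpleGraph V}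

/-- `G.dist` is `0` between unreachable vertices, so the triangle inequality needs connectedness. -/
theorem Connected.exists_mem_dist_le_add (hG : G.Connected) {x c : V} {s : List V} {m n : ℕ}
    (hxc : G.dist x c ≤ m) (hc : ∃ y ∈ s, G.dist c y ≤ n) : ∃ y ∈ s, G.dist x y ≤ m + n := by
  obtain ⟨y, hy, hcy⟩ := hc
  exact ⟨y, hy, (hG.dist_triangle).trans (Nat.add_le_add hxc hcy)⟩

end SimpleGraph

/-- If for every triple of vertices of a connected graph there are points
`c¹, c², c³`, mutually at distance at most 1, each within distance 6 of every
geodesic joining the corresponding pair, then every geodesic triangle has a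
7-center. -/
theorem stmt_8 {V : Type*} (G : SimpleGraph V) (hG : G.Connected)
    (h : ∀ a b d : V, ∃ c₁ c₂ c₃ : V,
      G.dist c₁ c₂ ≤ 1 ∧ G.dist c₂ c₃ ≤ 1 ∧ G.dist c₁ c₃ ≤ 1 ∧
      (∀ w : G.Walk a b, w.length = G.dist a b → ∃ y ∈ w.support, G.dist c₁ y ≤ 6) ∧
      (∀ w : G.Walk b d, w.length = G.dist b d → ∃ y ∈ w.support, G.dist c₂ y ≤ 6) ∧
      (∀ w : G.Walk d a, w.length = G.dist d a → ∃ y ∈ w.support, G.dist c₃ y ≤ 6)) :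
    ∀ (a b d : V) (wab : G.Walk a b) (wbd : G.Walk b d) (wda : G.Walk d a),
      wab.length = G.dist a b → wbd.length = G.dist b d → wda.length = G.dist d a →
      ∃ x : V, (∃ y ∈ wab.support, G.dist x y ≤ 7) ∧
        (∃ y ∈ wbd.support, G.dist x y ≤ 7) ∧ (∃ y ∈ wda.support, G.dist x y ≤ 7) := by
  intro a b d wab wbd wda hab hbd hda
  obtain ⟨c₁, c₂, c₃, h12, -, h13, H1, H2, H3⟩ := h a b d
  refine ⟨c₁, ?_, hG.exists_mem_dist_le_add h12 (H2 wbd hbd),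
    hG.exists_mem_dist_le_add h13 (H3 wda hda)⟩
  obtain ⟨y, hy, hc₁y⟩ := H1 wab hab
  exact ⟨y, hy, by omega⟩
end
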